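/- Every power of a cycle C_n^k with n ≥ 2k + 2 has biclique-chromatic number at most 3. -/

import Mathlib

open SimpleGraph

/-- The `k`-th power of a path on `n` vertices: `v_i ~ v_j` iff `0 < |i - j| ≤ k`. -/
def pathPower (n k : ℕ) : SimpleGraph (Fin n) :=
  SimpleGraph.fromRel (fun i j => i.val ≤ j.val ∧ j.val ≤ i.val + k)

/-- The cyclic distance between two vertices of `ZMod n`. -/
def cdist (n : ℕ) (i j : ZMod n) : ℕ := min (i - j).val (j - i).val

/-- The `k`-th power of a cycle on `n` vertices: `v_i ~ v_j` iff the
cyclic distance between `i` and `j` is between `1` and `k`. -/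
def cyclePower (n k : ℕ) : SimpleGraph (ZMod n) :=
  SimpleGraph.fromRel (fun i j => cdist n i j ≤ k)

/-- `S` induces a complete bipartite subgraph of `G`. -/
def IsCompleteBipartiteSet {V : Type*} (G : SimpleGraph V) (S : Set V) : Prop :=
  ∃ A B : Set V, A ∪ B = S ∧ Disjoint A B ∧
    (∀ a ∈ A, ∀ b ∈ B, G.Adj a b) ∧
    (∀ a ∈ A, ∀ a' ∈ A, ¬ G.Adj a a') ∧
    (∀ b ∈ B, ∀ b' ∈ B, ¬ G.Adj b b')

/-- A biclique: a maximal set of vertices inducing a complete bipartite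
subgraph with at least one edge. -/
def IsBiclique {V : Type*} (G : SimpleGraph V) (S : Set V) : Prop :=
  IsCompleteBipartiteSet G S ∧ (∃ u ∈ S, ∃ v ∈ S, G.Adj u v) ∧
  ∀ T : Set V, S ⊆ T → IsCompleteBipartiteSet G T → T = S

/-- A set is monochromatic under a colouring. -/
def Monochromatic {V α : Type*} (c : V → α) (S : Set V) : Prop :=
  ∃ a, ∀ v ∈ S, c v = a

/-- `G` admits a biclique-colouring with `m` colours. -/
def BicliqueColorable {V : Type*} (G : SimpleGraph V) (m : ℕ) : Prop :=
  ∃ c : V → Fin m, ∀ S : Set V, IsBiclique G S → ¬ Monochromatic c S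

/-- The biclique-chromatic number. -/
noncomputable def bicliqueChromaticNumber {V : Type*} (G : SimpleGraph V) : ℕ :=
  sInf {m | BicliqueColorable G m}

/-- `a`, `b`, `c` induce a path on three vertices (with middle vertex `b`). -/
def IsInducedP3 {V : Type*} (G : SimpleGraph V) (a b c : V) : Prop :=
  a ≠ b ∧ b ≠ c ∧ a ≠ c ∧ G.Adj a b ∧ G.Adj b c ∧ ¬ G.Adj a c

/-- `a`, `b`, `c`, `d` induce a four-cycle (in this cyclic order). -/
def IsInducedC4 {V : Type*} (G : SimpleGraph V) (a b c d : V) : Prop :=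
  a ≠ b ∧ a ≠ c ∧ a ≠ d ∧ b ≠ c ∧ b ≠ d ∧ c ≠ d ∧
  G.Adj a b ∧ G.Adj b c ∧ G.Adj c d ∧ G.Adj d a ∧ ¬ G.Adj a c ∧ ¬ G.Adj b d

/-!
Cut the cycle into blocks `[b(k+1), (b+1)(k+1))` of `k + 1` consecutive vertices (the last one
possibly shorter) and colour the blocks with three colours so that cyclically consecutive blocks
differ. A step of length at most `k` moves into the same or the next block, so a step between
two vertices of the same colour stays inside one block, and two such steps advance by less than
`k + 1`. But every biclique of `C_n^k` contains an induced path `a, a + x, a + x + y` with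
`x, y ≤ k < x + y`, so it is not monochromatic.
-/

namespace SimpleGraph

variable {V : Type*} {G : SimpleGraph V}

lemma isCompleteBipartiteSet_triple {u v w : V} (huv : G.Adj u v) (huw : G.Adj u w)
    (hvw : ¬ G.Adj v w) : IsCompleteBipartiteSet G {u, v, w} := by
  have hwv : ¬ G.Adj w v := fun h => hvw h.symm
  refine ⟨{u}, {v, w}, Set.singleton_union, ?_, ?_, ?_, ?_⟩
  · simp [huv.ne, huw.ne]
  · simp [huv, huw]
  · simp
  · simp [hvw, hwv]

lemma IsBiclique.exists_isInducedP3 {S : Set V} (hS : IsBiclique G S)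
    (hG : ∀ u v, G.Adj u v → ∃ w, w ≠ v ∧ G.Adj u w ∧ ¬ G.Adj v w) :
    ∃ a ∈ S, ∃ b ∈ S, ∃ c ∈ S, IsInducedP3 G a b c := by
  obtain ⟨⟨A, B, hAB, -, hcross, hA, hB⟩, ⟨u, hu, v, hv, huv⟩, hmax⟩ := hS
  wlog hside : u ∈ A ∧ v ∈ B generalizing u v
  · rw [← hAB] at hu hv
    rcases hu with hu | hu <;> rcases hv with hv | hv
    · exact absurd huv (hA u hu v hv)
    · exact absurd ⟨hu, hv⟩ hside
    · exact this v (hAB ▸ Or.inl hv) u (hAB ▸ Or.inr hu) huv.symm ⟨hv, hu⟩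
    · exact absurd huv (hB u hu v hv)
  obtain ⟨huA, hvB⟩ := hside
  by_cases hthird : ∃ w ∈ S, w ≠ u ∧ w ≠ v
  · obtain ⟨w, hw, hwu, hwv⟩ := hthird
    rcases hAB ▸ hw with hwA | hwB
    · exact ⟨u, hu, v, hv, w, hw, huv.ne, hwv.symm, hwu.symm, huv,
        (hcross w hwA v hvB).symm, hA u huA w hwA⟩
    · exact ⟨v, hv, u, hu, w, hw, huv.ne', hwu.symm, hwv.symm, huv.symm,
        hcross u huA w hwB, hB v hvB w hwB⟩
  · push Not at hthird
    obtain ⟨w, hwv, huw, hvw⟩ := hG u v huv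
    have hsub : S ⊆ {u, v, w} := fun z hz => by
      by_cases hzu : z = u
      · exact Or.inl hzu
      · exact Or.inr (Or.inl (hthird z hz hzu))
    have hw : w ∈ S := hmax _ hsub (isCompleteBipartiteSet_triple huv huw hvw) ▸ by simp
    exact (hwv (hthird w hw huw.ne')).elim

end SimpleGraph

section CyclePower

variable {n k : ℕ}

lemma ZMod.add_natCast_ne_self (a : ZMod n) {d : ℕ} (hd0 : 0 < d) (hdn : d < n) :
    a + d ≠ a := fun h =>
  absurd (Nat.le_of_dvd hd0 ((ZMod.natCast_eq_zero_iff d n).mp (add_eq_left.mp h))) (by omega)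

lemma cyclePower_adj_iff (hk : k < n) {u v : ZMod n} :
    (cyclePower n k).Adj u v ↔ ∃ d : ℕ, 0 < d ∧ d ≤ k ∧ (v = u + d ∨ u = v + d) := by
  have : NeZero n := ⟨by omega⟩
  have hstep : ∀ a b : ZMod n, a ≠ b → (b - a).val ≤ k →
      ∃ d : ℕ, 0 < d ∧ d ≤ k ∧ b = a + d := fun a b hab hle =>
    ⟨(b - a).val, ZMod.val_pos.mpr (sub_ne_zero.mpr hab.symm), hle,
      by rw [ZMod.natCast_zmod_val]; ring⟩
  have hval : ∀ (a : ZMod n) (d : ℕ), d < n → (a + d - a).val = d := fun a d hd => by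
    rw [add_sub_cancel_left, ZMod.val_cast_of_lt hd]
  simp only [cyclePower, fromRel_adj, cdist, min_comm ((v - u).val), or_self]
  constructor
  · rintro ⟨huv, hle⟩
    rcases min_le_iff.mp hle with hle | hle
    · obtain ⟨d, hd0, hdk, rfl⟩ := hstep v u huv.symm hle
      exact ⟨d, hd0, hdk, Or.inr rfl⟩
    · obtain ⟨d, hd0, hdk, rfl⟩ := hstep u v huv hle
      exact ⟨d, hd0, hdk, Or.inl rfl⟩
  · rintro ⟨d, hd0, hdk, rfl | rfl⟩
    · exact ⟨(ZMod.add_natCast_ne_self u hd0 (by omega)).symm,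
        min_le_of_right_le ((hval u d (by omega)).trans_le hdk)⟩
    · exact ⟨ZMod.add_natCast_ne_self v hd0 (by omega),
        min_le_of_left_le ((hval v d (by omega)).trans_le hdk)⟩

lemma cyclePower_not_adj_add (h : 2 * k + 2 ≤ n) (v : ZMod n) :
    ¬ (cyclePower n k).Adj v (v + (k + 1 : ℕ)) := by
  rw [cyclePower_adj_iff (by omega)]
  rintro ⟨d, -, hdk, heq | heq⟩
  · have := (ZMod.natCast_eq_natCast_iff' _ _ _).mp (add_left_cancel heq)
    rw [Nat.mod_eq_of_lt (by omega), Nat.mod_eq_of_lt (by omega)] at this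
    omega
  · rw [add_assoc, left_eq_add, ← Nat.cast_add, ZMod.natCast_eq_zero_iff] at heq
    have := Nat.le_of_dvd (by omega) heq
    omega

/-- The vertex `w` is `v ∓ (k + 1)`, on the side of `v` where `u` lies. -/
lemma cyclePower_exists_adj_not_adj (h : 2 * k + 2 ≤ n) {u v : ZMod n}
    (huv : (cyclePower n k).Adj u v) :
    ∃ w, w ≠ v ∧ (cyclePower n k).Adj u w ∧ ¬ (cyclePower n k).Adj v w := by
  obtain ⟨d, hd0, hdk, rfl | rfl⟩ := (cyclePower_adj_iff (by omega)).mp huv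
  · set w := u + d - (k + 1 : ℕ)
    refine ⟨w, fun hw => ZMod.add_natCast_ne_self w (d := k + 1) (by omega) (by omega)
      (by rw [sub_add_cancel, hw]), ?_, fun hadj => ?_⟩
    · refine (cyclePower_adj_iff (by omega)).mpr ⟨k + 1 - d, by omega, by omega, Or.inr ?_⟩
      rw [Nat.cast_sub (by omega)]
      ring
    · exact cyclePower_not_adj_add h w (by rwa [sub_add_cancel, adj_comm])
  · refine ⟨v + (k + 1 : ℕ), ZMod.add_natCast_ne_self v (by omega) (by omega), ?_,
      cyclePower_not_adj_add h v⟩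
    refine (cyclePower_adj_iff (by omega)).mpr ⟨k + 1 - d, by omega, by omega, Or.inl ?_⟩
    rw [Nat.cast_sub (by omega)]
    push_cast
    ring

lemma cyclePower_eq_of_add_eq_add (hk : k < n) {u w : ZMod n} {x y : ℕ} (hx : x ≤ k)
    (hy : y ≤ k) (heq : u + x = w + y) (hnadj : ¬ (cyclePower n k).Adj u w) : u = w := by
  wlog hxy : x ≤ y generalizing u w x y
  · exact (this hy hx heq.symm (fun h => hnadj h.symm) (by omega)).symm
  obtain ⟨e, rfl⟩ := Nat.exists_eq_add_of_le hxy
  have hu : u = w + e := by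
    push_cast at heq
    linear_combination heq
  rcases Nat.eq_zero_or_pos e with rfl | he
  · simpa using hu
  · exact absurd ((cyclePower_adj_iff hk).mpr ⟨e, he, by omega, Or.inr hu⟩) hnadj

lemma IsInducedP3.exists_steps_of_cyclePower (h : 2 * k + 2 ≤ n) {a b c : ZMod n}
    (hP : IsInducedP3 (cyclePower n k) a b c) :
    ∃ x y : ℕ, x ≤ k ∧ y ≤ k ∧ k < x + y ∧
      (b = a + x ∧ c = b + y ∨ b = c + x ∧ a = b + y) := by
  obtain ⟨-, -, hac, hab, hbc, hnac⟩ := hP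
  have hk : k < n := by omega
  rw [cyclePower_adj_iff hk] at hab hbc
  obtain ⟨x, hx0, hxk, rfl | rfl⟩ := hab <;> obtain ⟨y, hy0, hyk, hc | hb⟩ := hbc
  · refine ⟨x, y, hxk, hyk, ?_, Or.inl ⟨rfl, hc⟩⟩
    by_contra hle
    refine hnac ((cyclePower_adj_iff hk).mpr ⟨x + y, by omega, by omega, Or.inl ?_⟩)
    rw [hc]
    push_cast
    ring
  · exact absurd (cyclePower_eq_of_add_eq_add hk hxk hyk hb hnac) hac
  · exact absurd (cyclePower_eq_of_add_eq_add hk hyk hxk (by rw [hc]; ring) hnac) hac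
  · refine ⟨y, x, hyk, hxk, ?_, Or.inr ⟨hb, rfl⟩⟩
    by_contra hle
    refine hnac ((cyclePower_adj_iff hk).mpr ⟨y + x, by omega, by omega, Or.inr ?_⟩)
    rw [hb]
    push_cast
    ring

end CyclePower

section Colouring

/-- Blocks `0, …, 2⌊q/2⌋ - 1` alternate between colours `0` and `1`; the remaining one or two
blocks get `2` and then `1`. Consecutive blocks always differ, and colour `0` does not occur on
the last two blocks `q - 1` and `q`, which precede block `0` on the cycle. -/
def blockColour (q b : ℕ) : ℕ := if b < 2 * (q / 2) then b % 2 else 2 - b % 2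

lemma blockColour_lt_three (q b : ℕ) : blockColour q b < 3 := by
  unfold blockColour; split_ifs <;> omega

lemma blockColour_succ_ne (q b : ℕ) : blockColour q (b + 1) ≠ blockColour q b := by
  unfold blockColour; split_ifs <;> omega

lemma blockColour_zero {q : ℕ} (hq : 2 ≤ q) : blockColour q 0 = 0 := by
  unfold blockColour; split_ifs <;> omega

lemma blockColour_ne_zero {q b : ℕ} (hb : q ≤ b + 1) : blockColour q b ≠ 0 := by
  unfold blockColour; split_ifs <;> omega

def cyclePowerColouring (n k : ℕ) (v : ZMod n) : Fin 3 :=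
  ⟨blockColour (n / (k + 1)) (v.val / (k + 1)), blockColour_lt_three _ _⟩

variable {n k : ℕ}

lemma val_add_of_cyclePowerColouring_eq (h : 2 * k + 2 ≤ n) (v : ZMod n) {s : ℕ} (hs : s ≤ k)
    (hc : cyclePowerColouring n k v = cyclePowerColouring n k (v + s)) :
    (v + s).val = v.val + s ∧ (v.val + s) / (k + 1) = v.val / (k + 1) := by
  have : NeZero n := ⟨by omega⟩
  have hval : (v + s).val = (v.val + s) % n := by
    rw [ZMod.val_add, ZMod.val_cast_of_lt (by omega)]
  simp only [cyclePowerColouring, Fin.mk.injEq, hval] at hc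
  by_cases hwrap : v.val + s < n
  · rw [Nat.mod_eq_of_lt hwrap] at hc hval
    refine ⟨hval, ?_⟩
    have hge : v.val / (k + 1) ≤ (v.val + s) / (k + 1) := Nat.div_le_div_right (by omega)
    have hle : (v.val + s) / (k + 1) ≤ v.val / (k + 1) + 1 :=
      calc (v.val + s) / (k + 1) ≤ (v.val + (k + 1)) / (k + 1) := Nat.div_le_div_right (by omega)
        _ = v.val / (k + 1) + 1 := Nat.add_div_right _ (by omega)
    by_contra hne
    have hnext : (v.val + s) / (k + 1) = v.val / (k + 1) + 1 := by omega
    rw [hnext] at hc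
    exact blockColour_succ_ne _ _ hc.symm
  · have hv := ZMod.val_lt v
    have hq : n / (k + 1) * (k + 1) ≤ n := Nat.div_mul_le_self n (k + 1)
    have hzero : (v.val + s) % n / (k + 1) = 0 := by
      rw [Nat.mod_eq_sub_mod (by omega), Nat.mod_eq_of_lt (by omega)]
      exact Nat.div_eq_of_lt (by omega)
    have hlast : n / (k + 1) ≤ v.val / (k + 1) + 1 := by
      rw [← Nat.add_div_right _ (by omega), Nat.le_div_iff_mul_le (by omega)]
      omega
    have hq2 : 2 ≤ n / (k + 1) := (Nat.le_div_iff_mul_le (by omega)).mpr (by omega)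
    rw [hzero, blockColour_zero hq2] at hc
    exact absurd hc (blockColour_ne_zero hlast)

lemma cyclePowerColouring_ne_of_eq (h : 2 * k + 2 ≤ n) (a : ZMod n) {x y : ℕ} (hx : x ≤ k)
    (hy : y ≤ k) (hxy : k < x + y)
    (hab : cyclePowerColouring n k a = cyclePowerColouring n k (a + x)) :
    cyclePowerColouring n k (a + x) ≠ cyclePowerColouring n k (a + x + y) := by
  intro hbc
  obtain ⟨hval, hblock⟩ := val_add_of_cyclePowerColouring_eq h a hx hab
  obtain ⟨-, hblock'⟩ := val_add_of_cyclePowerColouring_eq h (a + x) hy hbc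
  rw [hval, hblock] at hblock'
  have hnext : a.val / (k + 1) + 1 ≤ (a.val + x + y) / (k + 1) :=
    calc a.val / (k + 1) + 1 = (a.val + (k + 1)) / (k + 1) := (Nat.add_div_right _ (by omega)).symm
      _ ≤ (a.val + x + y) / (k + 1) := Nat.div_le_div_right (by omega)
  omega

theorem cyclePower_bicliqueColorable_three (h : 2 * k + 2 ≤ n) :
    BicliqueColorable (cyclePower n k) 3 := by
  refine ⟨cyclePowerColouring n k, fun S hS ⟨α, hα⟩ => ?_⟩
  have hmono : ∀ u ∈ S, ∀ v ∈ S, cyclePowerColouring n k u = cyclePowerColouring n k v :=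
    fun u hu v hv => (hα u hu).trans (hα v hv).symm
  obtain ⟨a, ha, b, hb, c, hc, hP⟩ :=
    hS.exists_isInducedP3 fun _ _ => cyclePower_exists_adj_not_adj h
  obtain ⟨x, y, hx, hy, hxy, ⟨rfl, rfl⟩ | ⟨rfl, rfl⟩⟩ := hP.exists_steps_of_cyclePower h
  · exact cyclePowerColouring_ne_of_eq h a hx hy hxy (hmono _ ha _ hb) (hmono _ hb _ hc)
  · exact cyclePowerColouring_ne_of_eq h c hx hy hxy (hmono _ hc _ hb) (hmono _ hb _ ha)

end Colouring

/-- `C_n^k` with `n ≥ 2k + 2` has biclique-chromatic number at most 3. -/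
theorem stmt_11 (n k : ℕ) (h : 2 * k + 2 ≤ n) :
    bicliqueChromaticNumber (cyclePower n k) ≤ 3 :=
  Nat.sInf_le (cyclePower_bicliqueColorable_three h)
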